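/- arXiv:2503.03343 — 5 statements merged into one kernel-verified Lean document; each statement's English description precedes it below -/
import Mathlib

section
/- Let p ≥ 1, m ≥ 1 and τ ∈ [0,2]. Then there exists a constant C > 0, depending only on m, p and τ, such that for all X, Y ∈ [0,∞): |X^p − Y^p|² ≤ C · (max{X,Y})^{2(p−1)−τ(m−1)} · |X^m − Y^m|^τ · |X − Y|^{2−τ}. -/
open Real

private lemma power_diff_key (m p τ : ℝ) (hp : 1 ≤ p) (hm : 1 ≤ m)
    (hτ₀ : 0 ≤ τ) (hτ₂ : τ ≤ 2) (X Y : ℝ) (hY : 0 ≤ Y) (hXY : Y ≤ X) :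
    |X ^ p - Y ^ p| ^ (2 : ℝ) ≤
      p ^ 2 * X ^ (2 * (p - 1) - τ * (m - 1)) * |X ^ m - Y ^ m| ^ τ *
        |X - Y| ^ (2 - τ) := by
  rcases eq_or_lt_of_le hXY with rfl | hlt
  · simp only [sub_self, abs_zero]
    rw [Real.zero_rpow (by norm_num : (2:ℝ) ≠ 0)]
    positivity
  · have hX : 0 < X := lt_of_le_of_lt hY hlt
    have hd : 0 < X - Y := sub_pos.2 hlt
    have hpp : (0:ℝ) < p := lt_of_lt_of_le one_pos hp
    have hmp : (0:ℝ) < m := lt_of_lt_of_le one_pos hm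
    have hppow : 0 < X ^ p - Y ^ p := sub_pos.2 (Real.rpow_lt_rpow hY hlt hpp)
    have hmpow : 0 < X ^ m - Y ^ m := sub_pos.2 (Real.rpow_lt_rpow hY hlt hmp)
    rw [abs_of_pos hppow, abs_of_pos hmpow, abs_of_pos hd]
    have hXp1 : X ^ (p - 1) * X = X ^ p := by
      rw [← Real.rpow_add_one hX.ne' (p - 1)]; ring_nf
    have hXm1 : X ^ (m - 1) * X = X ^ m := by
      rw [← Real.rpow_add_one hX.ne' (m - 1)]; ring_nf
    -- Step 1 : X^p - Y^p ≤ p * X^(p-1) * (X - Y)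
    have step1 : X ^ p - Y ^ p ≤ p * X ^ (p - 1) * (X - Y) := by
      have hb := one_add_mul_self_le_rpow_one_add
        (s := Y / X - 1) (by have := div_nonneg hY hX.le; linarith) hp
      have h1 : (1 + (Y / X - 1)) = Y / X := by ring
      rw [h1] at hb
      have hXp : 0 < X ^ p := Real.rpow_pos_of_pos hX p
      have hdiv : (Y / X) ^ p = Y ^ p / X ^ p := Real.div_rpow hY hX.le p
      have h2 := mul_le_mul_of_nonneg_left hb hXp.le
      rw [hdiv, mul_div_cancel₀ _ hXp.ne'] at h2
      -- h2 : X^p * (1 + p * (Y/X - 1)) ≤ Y^p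
      have hq : X ^ p * (1 + p * (Y / X - 1)) =
          X ^ p + p * (X ^ (p - 1) * Y - X ^ p) := by
        rw [← hXp1]; field_simp
      rw [hq] at h2
      nlinarith [h2, hXp1]
    -- Step 2 : X^(m-1) * (X - Y) ≤ X^m - Y^m
    have step2 : X ^ (m - 1) * (X - Y) ≤ X ^ m - Y ^ m := by
      have hYm : Y ^ m ≤ X ^ (m - 1) * Y := by
        rcases eq_or_lt_of_le hY with rfl | hY'
        · rw [Real.zero_rpow hmp.ne', mul_zero]
        · calc Y ^ m = Y ^ (m - 1) * Y := by
                rw [← Real.rpow_add_one hY'.ne' (m - 1)]; ring_nf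
            _ ≤ X ^ (m - 1) * Y :=
                mul_le_mul_of_nonneg_right
                  (Real.rpow_le_rpow hY'.le hXY (by linarith)) hY'.le
      nlinarith [hXm1, hYm]
    -- Step 3
    have h2 : (X ^ p - Y ^ p) ^ (2:ℝ) ≤ (p * X ^ (p - 1) * (X - Y)) ^ (2:ℝ) :=
      Real.rpow_le_rpow hppow.le step1 (by norm_num)
    have h3 : (X ^ (m - 1) * (X - Y)) ^ τ ≤ (X ^ m - Y ^ m) ^ τ :=
      Real.rpow_le_rpow (by positivity) step2 hτ₀
    have heq : (p * X ^ (p - 1) * (X - Y)) ^ (2:ℝ) =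
        p ^ 2 * X ^ (2 * (p - 1) - τ * (m - 1)) *
          (X ^ (m - 1) * (X - Y)) ^ τ * (X - Y) ^ (2 - τ) := by
      have hXpm1 : (0:ℝ) ≤ X ^ (p - 1) := (Real.rpow_pos_of_pos hX _).le
      have e1 : X ^ ((p - 1) * 2) =
          X ^ (2 * (p - 1) - τ * (m - 1)) * X ^ ((m - 1) * τ) := by
        rw [← Real.rpow_add hX]; congr 1; ring
      have e2 : (X - Y) ^ (2 : ℝ) = (X - Y) ^ τ * (X - Y) ^ (2 - τ) := by
        rw [← Real.rpow_add hd]; congr 1; ring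
      rw [Real.mul_rpow (by positivity) hd.le, Real.mul_rpow hpp.le hXpm1,
        Real.mul_rpow (Real.rpow_pos_of_pos hX _).le hd.le,
        ← Real.rpow_mul hX.le, ← Real.rpow_mul hX.le, e1, e2, Real.rpow_two]
      ring
    calc (X ^ p - Y ^ p) ^ (2:ℝ)
        ≤ (p * X ^ (p - 1) * (X - Y)) ^ (2:ℝ) := h2
      _ = p ^ 2 * X ^ (2 * (p - 1) - τ * (m - 1)) *
            (X ^ (m - 1) * (X - Y)) ^ τ * (X - Y) ^ (2 - τ) := heq
      _ ≤ p ^ 2 * X ^ (2 * (p - 1) - τ * (m - 1)) *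
            (X ^ m - Y ^ m) ^ τ * (X - Y) ^ (2 - τ) := by gcongr

/-- Lemma 5.1: an extension of a lemma of Ghidaglia–Peletier. -/
theorem power_difference_estimate
    (m p τ : ℝ) (hp : 1 ≤ p) (hm : 1 ≤ m) (hτ₀ : 0 ≤ τ) (hτ₂ : τ ≤ 2) :
    ∃ C : ℝ, 0 < C ∧
      ∀ X Y : ℝ, 0 ≤ X → 0 ≤ Y →
        |X ^ p - Y ^ p| ^ (2 : ℝ) ≤
          C * max X Y ^ (2 * (p - 1) - τ * (m - 1)) * |X ^ m - Y ^ m| ^ τ *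
            |X - Y| ^ (2 - τ) := by
  refine ⟨p ^ 2, by positivity, fun X Y hX hY => ?_⟩
  rcases le_total Y X with h | h
  · rw [max_eq_left h]
    exact power_diff_key m p τ hp hm hτ₀ hτ₂ X Y hY h
  · rw [max_eq_right h, abs_sub_comm (X ^ p), abs_sub_comm (X ^ m), abs_sub_comm X]
    exact power_diff_key m p τ hp hm hτ₀ hτ₂ Y X hX h
end

section
/- There exists A₀ > 0, depending only on N, m, p and σ, such that for every A ≥ A₀ and every T > 0 the following holds with a := (m A^{m−1}/(β(m−1)))^{1/2}: for every t ∈ [0,T) and every x ∈ ℝᴺ with 0 < |x| < a (T−t)^{−β}, the map s ↦ S(s,x) is differentiable at t, the map y ↦ S(t,y)^m is twice continuously differentiable on a neighborhood of x, and ∂_t S(t,x) − Δ_x (S^m)(t,x) − |x|^σ S(t,x)^p ≤ 0, where Δ_x denotes the Laplacian in the space variable. -/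
open MeasureTheory

/-- The Laplacian of `f : ℝᴺ → ℝ` at `x`, as the sum of the second partial derivatives. -/
noncomputable def laplacian {N : ℕ} (f : EuclideanSpace ℝ (Fin N) → ℝ)
    (x : EuclideanSpace ℝ (Fin N)) : ℝ :=
  ∑ i : Fin N,
    fderiv ℝ (fun y => fderiv ℝ f y (EuclideanSpace.single i 1)) x (EuclideanSpace.single i 1)

open Filter Topology

/-!
Where the profile is positive, put `G = |x|² (T-t)^{2β} / a²`, `f = 1 - G` and `γ = 1/(m-1)`,
so that `S = (T-t)^{-α} A f^γ`. The exponent relations `α(m-1) = 2β+1` and `α(p-1) + βσ = 1`,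
together with `a² = m A^{m-1} / (β(m-1))`, make `∂ₜS` and `ΔSᵐ` multiples of `(T-t)^{-α-1} A`, and,
since `σ < 0` and `|x| < a (T-t)^{-β}`, bound `|x|^σ Sᵖ` below by the same factor times
`W f^{γp}` with `W = a^σ A^{p-1}`. What is left is
`(α + 2Nβ) f^γ - 2βγ G f^{γ-1} ≤ W f^{γp}`: near the edge of the support (`f` small) the
diffusion term `2βγ G f^{γ-1}` wins, and elsewhere the reaction term does, because
`W` is a multiple of `A^{p - p_G}` and hence large for large `A`.
-/

theorem balance_inequality {L B W γ r G : ℝ} (hL : 0 < L) (hB : 0 < B) (hG0 : 0 ≤ G) (hG1 : G < 1)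
    (hr : 0 ≤ r) (hW : L ≤ W * (B / (L + B)) ^ r) :
    L * (1 - G) ^ γ - B * G * (1 - G) ^ (γ - 1) ≤ W * (1 - G) ^ (γ + r) := by
  have hf : 0 < 1 - G := by linarith
  have hBG : 0 ≤ B * G * (1 - G) ^ (γ - 1) := by positivity
  have hW0 : 0 < W := pos_of_mul_pos_left (hL.trans_le hW) (by positivity)
  rcases le_or_gt (1 - G) (B / (L + B)) with hsmall | hlarge
  · have hlin : L * (1 - G) ≤ B * G := by
      rw [le_div_iff₀ (by positivity)] at hsmall; linarith
    calc L * (1 - G) ^ γ - B * G * (1 - G) ^ (γ - 1)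
        = (L * (1 - G) - B * G) * (1 - G) ^ (γ - 1) := by
          rw [Real.rpow_sub_one hf.ne']; field_simp
      _ ≤ 0 := mul_nonpos_of_nonpos_of_nonneg (by linarith) (by positivity)
      _ ≤ W * (1 - G) ^ (γ + r) := by positivity
  · have hLW : L ≤ W * (1 - G) ^ r :=
      hW.trans (by gcongr)
    calc L * (1 - G) ^ γ - B * G * (1 - G) ^ (γ - 1)
        ≤ W * (1 - G) ^ r * (1 - G) ^ γ := by nlinarith [Real.rpow_pos_of_pos hf γ]
      _ = W * (1 - G) ^ (γ + r) := by rw [Real.rpow_add hf]; ring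

theorem tendsto_sqrt_rpow_mul_rpow_atTop {b D K r σ q : ℝ} (hb : 0 < b) (hD : 0 < D) (hK : 0 < K)
    (h : 0 < r * σ / 2 + q) :
    Tendsto (fun A => √(b * A ^ r / D) ^ σ * A ^ q * K) atTop atTop := by
  refine ((tendsto_rpow_atTop h).const_mul_atTop
    (by positivity : 0 < (b / D) ^ (σ / 2) * K)).congr' ?_
  filter_upwards [eventually_gt_atTop 0] with A hA
  rw [Real.sqrt_eq_rpow, ← Real.rpow_mul (by positivity), mul_div_right_comm b,
    Real.mul_rpow (by positivity) (by positivity), ← Real.rpow_mul hA.le, Real.rpow_add hA]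
  ring_nf

section Laplacian

variable {N : ℕ}

theorem laplacian_congr_of_eventuallyEq {f g : EuclideanSpace ℝ (Fin N) → ℝ}
    {x : EuclideanSpace ℝ (Fin N)} (h : f =ᶠ[𝓝 x] g) : laplacian f x = laplacian g x := by
  refine Finset.sum_congr rfl fun i _ => ?_
  congr 1
  refine EventuallyEq.fderiv_eq ?_
  filter_upwards [h.eventuallyEq_nhds] with y hy
  rw [hy.fderiv_eq]

theorem hasFDerivAt_one_sub_norm_sq_mul {E : Type*} [NormedAddCommGroup E] [InnerProductSpace ℝ E]
    (k : ℝ) (y : E) :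
    HasFDerivAt (fun z : E => 1 - ‖z‖ ^ 2 * k) (-(2 * k) • innerSL ℝ y) y :=
  (((hasStrictFDerivAt_norm_sq y).hasFDerivAt.mul_const k).const_sub 1).congr_fderiv (by module)

theorem fderiv_radial_rpow_apply_single (c k q : ℝ) {y : EuclideanSpace ℝ (Fin N)}
    (hy : 1 - ‖y‖ ^ 2 * k ≠ 0) (i : Fin N) :
    fderiv ℝ (fun z => c * (1 - ‖z‖ ^ 2 * k) ^ q) y (EuclideanSpace.single i 1)
      = -(2 * c * q * k) * (1 - ‖y‖ ^ 2 * k) ^ (q - 1) * y i := by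
  rw [(((hasFDerivAt_one_sub_norm_sq_mul k y).rpow_const (Or.inl hy)).const_mul c).fderiv]
  simp [EuclideanSpace.inner_single_right]
  ring

theorem fderiv_fderiv_radial_rpow_apply_single (c k q : ℝ) {x : EuclideanSpace ℝ (Fin N)}
    (hx : 0 < 1 - ‖x‖ ^ 2 * k) (i : Fin N) :
    fderiv ℝ (fun y => fderiv ℝ (fun z => c * (1 - ‖z‖ ^ 2 * k) ^ q) y
        (EuclideanSpace.single i 1)) x (EuclideanSpace.single i 1)
      = -(2 * c * q * k) * (1 - ‖x‖ ^ 2 * k) ^ (q - 1)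
          + 4 * c * q * (q - 1) * k ^ 2 * (1 - ‖x‖ ^ 2 * k) ^ (q - 2) * x i ^ 2 := by
  have hpos : ∀ᶠ y in 𝓝 x, 0 < 1 - ‖y‖ ^ 2 * k :=
    (hasFDerivAt_one_sub_norm_sq_mul k x).continuousAt.eventually (eventually_gt_nhds hx)
  have hpartial : (fun y => fderiv ℝ (fun z => c * (1 - ‖z‖ ^ 2 * k) ^ q) y
      (EuclideanSpace.single i 1)) =ᶠ[𝓝 x]
        fun y => -(2 * c * q * k) * (1 - ‖y‖ ^ 2 * k) ^ (q - 1) * y i := by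
    filter_upwards [hpos] with y hy
    exact fderiv_radial_rpow_apply_single c k q hy.ne' i
  have hderiv : HasFDerivAt (fun y => -(2 * c * q * k) * (1 - ‖y‖ ^ 2 * k) ^ (q - 1) * y i) _ x :=
    (((hasFDerivAt_one_sub_norm_sq_mul k x).rpow_const (Or.inl hx.ne')).const_mul _).mul
      (EuclideanSpace.proj i : EuclideanSpace ℝ (Fin N) →L[ℝ] ℝ).hasFDerivAt
  rw [hpartial.fderiv_eq, hderiv.fderiv]
  simp [EuclideanSpace.inner_single_right]
  rw [show q - 1 - 1 = q - 2 by ring]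
  ring

theorem laplacian_radial_rpow (c k q : ℝ) {x : EuclideanSpace ℝ (Fin N)}
    (hx : 0 < 1 - ‖x‖ ^ 2 * k) :
    laplacian (fun z => c * (1 - ‖z‖ ^ 2 * k) ^ q) x
      = -(2 * c * q * k) * (N * (1 - ‖x‖ ^ 2 * k) ^ (q - 1)
          - 2 * (q - 1) * k * ‖x‖ ^ 2 * (1 - ‖x‖ ^ 2 * k) ^ (q - 2)) := by
  rw [laplacian, Finset.sum_congr rfl fun i _ => fderiv_fderiv_radial_rpow_apply_single c k q hx i,
    Finset.sum_add_distrib, ← Finset.mul_sum _ _ (4 * c * q * (q - 1) * k ^ 2 * _),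
    ← EuclideanSpace.real_norm_sq_eq]
  simp only [Finset.sum_const, Finset.card_univ, Fintype.card_fin, nsmul_eq_mul]
  ring

end Laplacian

section SelfSimilarProfile

variable {N : ℕ} {T α β γ A a t m p σ : ℝ} {x : EuclideanSpace ℝ (Fin N)}

noncomputable def selfSimilarVarSq (T β a t : ℝ) (x : EuclideanSpace ℝ (Fin N)) : ℝ :=
  ‖x‖ ^ 2 * (T - t) ^ (2 * β) / a ^ 2

noncomputable def selfSimilarProfile (T α β γ A a t : ℝ) (x : EuclideanSpace ℝ (Fin N)) : ℝ :=
  (T - t) ^ (-α) * A * (max 0 (1 - selfSimilarVarSq T β a t x)) ^ γ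

theorem continuous_selfSimilarVarSq (T β a t : ℝ) :
    Continuous (selfSimilarVarSq (N := N) T β a t) := by
  unfold selfSimilarVarSq
  fun_prop

theorem selfSimilarVarSq_lt_one (ht : t < T) (ha : 0 < a) (hxa : ‖x‖ < a * (T - t) ^ (-β)) :
    selfSimilarVarSq T β a t x < 1 := by
  have hτ : 0 < T - t := sub_pos.2 ht
  have hx : ‖x‖ * (T - t) ^ β < a := by
    rwa [← lt_div_iff₀ (by positivity), div_eq_mul_inv, ← Real.rpow_neg hτ.le]
  rw [selfSimilarVarSq, div_lt_one (by positivity), show 2 * β = β * 2 by ring,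
    Real.rpow_mul hτ.le, Real.rpow_two, ← mul_pow]
  exact pow_lt_pow_left₀ hx (by positivity) two_ne_zero

theorem selfSimilarProfile_of_lt_one (hG : selfSimilarVarSq T β a t x < 1) :
    selfSimilarProfile T α β γ A a t x
      = (T - t) ^ (-α) * A * (1 - selfSimilarVarSq T β a t x) ^ γ := by
  rw [selfSimilarProfile, max_eq_right (by linarith)]

theorem hasDerivAt_selfSimilarVarSq_time (ht : t < T) :
    HasDerivAt (fun s => selfSimilarVarSq T β a s x)
      (-(2 * β) * selfSimilarVarSq T β a t x / (T - t)) t := by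
  have hτ : T - t ≠ 0 := (sub_pos.2 ht).ne'
  have h := ((((hasDerivAt_id' t).const_sub T).rpow_const (p := 2 * β) (Or.inl hτ)).const_mul
    (‖x‖ ^ 2)).div_const (a ^ 2)
  refine h.congr_deriv ?_
  rw [selfSimilarVarSq, Real.rpow_sub_one hτ]
  field_simp

theorem hasDerivAt_selfSimilarProfile_time (ht : t < T) (hG : selfSimilarVarSq T β a t x < 1) :
    HasDerivAt (fun s => selfSimilarProfile T α β γ A a s x)
      ((T - t) ^ (-α - 1) * A * (α * (1 - selfSimilarVarSq T β a t x) ^ γ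
        + 2 * β * γ * selfSimilarVarSq T β a t x * (1 - selfSimilarVarSq T β a t x) ^ (γ - 1)))
      t := by
  have hτ : T - t ≠ 0 := (sub_pos.2 ht).ne'
  have hG' := hasDerivAt_selfSimilarVarSq_time (β := β) (a := a) (x := x) ht
  have hprod :=
    ((((hasDerivAt_id' t).const_sub T).rpow_const (p := -α) (Or.inl hτ)).mul_const A).mul
      ((hG'.const_sub 1).rpow_const (p := γ) (Or.inl (by linarith)))
  have hmax : (fun s => selfSimilarProfile T α β γ A a s x) =ᶠ[𝓝 t]
      fun s => (T - s) ^ (-α) * A * (1 - selfSimilarVarSq T β a s x) ^ γ := by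
    filter_upwards [hG'.continuousAt.eventually (eventually_lt_nhds hG)] with s hs
    exact selfSimilarProfile_of_lt_one hs
  refine (hprod.congr_deriv ?_).congr_of_eventuallyEq hmax
  rw [Real.rpow_sub_one hτ]
  field_simp

theorem selfSimilarProfile_rpow_of_lt_one (ht : t ≤ T) (hA : 0 ≤ A) {y : EuclideanSpace ℝ (Fin N)}
    (hG : selfSimilarVarSq T β a t y < 1) :
    selfSimilarProfile T α β γ A a t y ^ m
      = ((T - t) ^ (-α) * A) ^ m * (1 - ‖y‖ ^ 2 * ((T - t) ^ (2 * β) / a ^ 2)) ^ (γ * m) := by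
  have hτ : 0 ≤ T - t := sub_nonneg.2 ht
  rw [selfSimilarProfile_of_lt_one hG,
    Real.mul_rpow (by positivity) (Real.rpow_nonneg (by linarith) _), ← Real.rpow_mul (by linarith), selfSimilarVarSq, mul_div_assoc]

theorem contDiffOn_selfSimilarProfile_rpow (n : WithTop ℕ∞) (ht : t ≤ T) (hA : 0 ≤ A) :
    ContDiffOn ℝ n (fun y => selfSimilarProfile T α β γ A a t y ^ m)
      {y : EuclideanSpace ℝ (Fin N) | selfSimilarVarSq T β a t y < 1} := by
  refine ContDiffOn.congr (fun y hy => ?_) fun y hy => selfSimilarProfile_rpow_of_lt_one ht hA hy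
  have hy' : 1 - ‖y‖ ^ 2 * ((T - t) ^ (2 * β) / a ^ 2) ≠ 0 := by
    rw [← mul_div_assoc]; exact (sub_pos.2 hy).ne'
  exact (contDiffAt_const.mul ((contDiffAt_const.sub ((contDiff_norm_sq ℝ).contDiffAt.mul
    contDiffAt_const)).rpow_const_of_ne hy')).contDiffWithinAt

theorem laplacian_selfSimilarProfile_rpow (hm : 1 < m) (hγ : γ * (m - 1) = 1)
    (hαβ : α * (m - 1) = 2 * β + 1) (ha : a ^ 2 = m * A ^ (m - 1) / (β * (m - 1)))
    (hβ : 0 < β) (hA : 0 < A) (ht : t < T) (hG : selfSimilarVarSq T β a t x < 1) :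
    laplacian (fun y => selfSimilarProfile T α β γ A a t y ^ m) x
      = (T - t) ^ (-α - 1) * A
          * (4 * β * γ * selfSimilarVarSq T β a t x * (1 - selfSimilarVarSq T β a t x) ^ (γ - 1)
            - 2 * N * β * (1 - selfSimilarVarSq T β a t x) ^ γ) := by
  have hτ : 0 < T - t := sub_pos.2 ht
  set k := (T - t) ^ (2 * β) / a ^ 2 with hk
  have hGk : selfSimilarVarSq T β a t x = ‖x‖ ^ 2 * k := mul_div_assoc _ _ _
  have hnear : (fun y => selfSimilarProfile T α β γ A a t y ^ m) =ᶠ[𝓝 x]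
      fun y => ((T - t) ^ (-α) * A) ^ m * (1 - ‖y‖ ^ 2 * k) ^ (γ * m) := by
    filter_upwards [(continuous_selfSimilarVarSq T β a t).continuousAt.eventually
      (eventually_lt_nhds hG)] with y hy
    exact selfSimilarProfile_rpow_of_lt_one ht.le hA.le hy
  have hscale : ((T - t) ^ (-α) * A) ^ m * (γ * m) * k = (T - t) ^ (-α - 1) * A * β := by
    have hτm : (T - t) ^ (-α * m) * (T - t) ^ (2 * β) = (T - t) ^ (-α - 1) := by
      rw [← Real.rpow_add hτ]; congr 1; linarith
    have hAm : A ^ m = A ^ (m - 1) * A := by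
      rw [← Real.rpow_add_one hA.ne']; ring_nf
    rw [Real.mul_rpow (by positivity) hA.le, ← Real.rpow_mul hτ.le, hAm, ← hτm, hk, ha]
    field_simp
    linear_combination hγ
  rw [laplacian_congr_of_eventuallyEq hnear, laplacian_radial_rpow _ _ _ (hGk ▸ sub_pos.2 hG),
    show γ * m - 1 = γ by linarith, show γ * m - 2 = γ - 1 by linarith, hGk]
  linear_combination
    -2 * (N * (1 - ‖x‖ ^ 2 * k) ^ γ - 2 * γ * k * ‖x‖ ^ 2 * (1 - ‖x‖ ^ 2 * k) ^ (γ - 1)) * hscale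

theorem le_rpow_mul_selfSimilarProfile_rpow (hσ : σ ≤ 0) (hαp : α * (p - 1) + β * σ = 1)
    (hA : 0 < A) (ha : 0 < a) (ht : t < T) (hx0 : 0 < ‖x‖) (hxa : ‖x‖ < a * (T - t) ^ (-β)) :
    (T - t) ^ (-α - 1) * A * (a ^ σ * A ^ (p - 1) * (1 - selfSimilarVarSq T β a t x) ^ (γ * p))
      ≤ ‖x‖ ^ σ * selfSimilarProfile T α β γ A a t x ^ p := by
  have hτ : 0 < T - t := sub_pos.2 ht
  have hG := selfSimilarVarSq_lt_one ht ha hxa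
  have hf : 0 ≤ 1 - selfSimilarVarSq T β a t x := by linarith
  have hτexp : (T - t) ^ (-β * σ) * (T - t) ^ (-α * p) = (T - t) ^ (-α - 1) := by
    rw [← Real.rpow_add hτ]; congr 1; linarith
  have hAp : A ^ p = A ^ (p - 1) * A := by
    rw [← Real.rpow_add_one hA.ne']; ring_nf
  have hnorm : (a * (T - t) ^ (-β)) ^ σ ≤ ‖x‖ ^ σ :=
    Real.rpow_le_rpow_of_nonpos hx0 hxa.le hσ
  rw [Real.mul_rpow ha.le (by positivity), ← Real.rpow_mul hτ.le] at hnorm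
  calc (T - t) ^ (-α - 1) * A * (a ^ σ * A ^ (p - 1) * (1 - selfSimilarVarSq T β a t x) ^ (γ * p))
      = a ^ σ * (T - t) ^ (-β * σ) * selfSimilarProfile T α β γ A a t x ^ p := by
        rw [selfSimilarProfile_of_lt_one hG, Real.mul_rpow (by positivity) (by positivity),
          Real.mul_rpow (by positivity) hA.le, ← Real.rpow_mul hτ.le, ← Real.rpow_mul hf, hAp,
          ← hτexp]
        ring
    _ ≤ ‖x‖ ^ σ * selfSimilarProfile T α β γ A a t x ^ p := by
        gcongr
        rw [selfSimilarProfile_of_lt_one hG]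
        positivity

theorem selfSimilarProfile_subsolution (hm : 1 < m) (hp : 1 < p) (hσ : σ ≤ 0) (hα : 0 < α)
    (hβ : 0 < β) (hA : 0 < A) (hγ : γ * (m - 1) = 1) (hαm : α * (m - 1) = 2 * β + 1)
    (hαp : α * (p - 1) + β * σ = 1) (ha : a = √(m * A ^ (m - 1) / (β * (m - 1))))
    (hlarge : α + 2 * N * β
      ≤ a ^ σ * A ^ (p - 1) * (2 * β * γ / (α + 2 * N * β + 2 * β * γ)) ^ (γ * (p - 1)))
    (ht : t < T) (hx0 : 0 < ‖x‖) (hxa : ‖x‖ < a * (T - t) ^ (-β)) :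
    DifferentiableAt ℝ (fun s => selfSimilarProfile T α β γ A a s x) t ∧
      (∃ U ∈ 𝓝 x, ContDiffOn ℝ 2 (fun y => selfSimilarProfile T α β γ A a t y ^ m) U) ∧
      deriv (fun s => selfSimilarProfile T α β γ A a s x) t
        - laplacian (fun y => selfSimilarProfile T α β γ A a t y ^ m) x
        - ‖x‖ ^ σ * selfSimilarProfile T α β γ A a t x ^ p ≤ 0 := by
  have hD : 0 < m * A ^ (m - 1) / (β * (m - 1)) := by
    have := Real.rpow_pos_of_pos hA (m - 1)
    apply div_pos <;> nlinarith
  have ha0 : 0 < a := ha ▸ Real.sqrt_pos.2 hD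
  have hG := selfSimilarVarSq_lt_one ht ha0 hxa
  have hG0 : 0 ≤ selfSimilarVarSq T β a t x := by unfold selfSimilarVarSq; positivity
  have hγ0 : 0 < γ := by nlinarith
  have hderiv := hasDerivAt_selfSimilarProfile_time (α := α) (γ := γ) (A := A) ht hG
  refine ⟨hderiv.differentiableAt, ⟨_, (isOpen_lt (continuous_selfSimilarVarSq T β a t)
    continuous_const).mem_nhds hG, contDiffOn_selfSimilarProfile_rpow 2 ht.le hA.le⟩, ?_⟩
  rw [hderiv.deriv,
    laplacian_selfSimilarProfile_rpow hm hγ hαm (ha ▸ Real.sq_sqrt hD.le) hβ hA ht hG]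
  have hreact := le_rpow_mul_selfSimilarProfile_rpow (γ := γ) hσ hαp hA ha0 ht hx0 hxa
  have hbalance := balance_inequality (γ := γ) (by positivity) (by positivity) hG0 hG
    (by nlinarith) hlarge
  rw [show γ + γ * (p - 1) = γ * p by ring] at hbalance
  have hscale : 0 ≤ (T - t) ^ (-α - 1) * A := by
    have := Real.rpow_pos_of_pos (sub_pos.2 ht) (-α - 1)
    positivity
  nlinarith [mul_le_mul_of_nonneg_left hbalance hscale]

end SelfSimilarProfile

theorem self_similar_subsolution_general
    (N : ℕ) (m p σ : ℝ) (hm : 1 < m) (hp : 1 < p)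
    (hσl : max (-2) (-(N : ℝ)) < σ) (hσu : σ < 0)
    (hpG : 1 - σ * (m - 1) / 2 < p) (hpm : p < m) :
    ∃ A₀ : ℝ, 0 < A₀ ∧
      ∀ A : ℝ, A₀ ≤ A → ∀ T : ℝ, 0 < T →
        let α := (σ + 2) / (2 * (p - (1 - σ * (m - 1) / 2)))
        let β := (m - p) / (2 * (p - (1 - σ * (m - 1) / 2)))
        let a := Real.sqrt (m * A ^ (m - 1) / (β * (m - 1)))
        let S : ℝ → EuclideanSpace ℝ (Fin N) → ℝ := fun t x =>
          (T - t) ^ (-α) * A * (max 0 (1 - ‖x‖ ^ 2 * (T - t) ^ (2 * β) / a ^ 2)) ^ (1 / (m - 1))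
        ∀ t : ℝ, 0 ≤ t → t < T →
          ∀ x : EuclideanSpace ℝ (Fin N), 0 < ‖x‖ → ‖x‖ < a * (T - t) ^ (-β) →
            DifferentiableAt ℝ (fun s => S s x) t ∧
            (∃ U ∈ nhds x, ContDiffOn ℝ 2 (fun y => S t y ^ m) U) ∧
            deriv (fun s => S s x) t - laplacian (fun y => S t y ^ m) x
                - ‖x‖ ^ σ * S t x ^ p ≤ 0 := by
  have hσ2 : -2 < σ := (le_max_left _ _).trans_lt hσl
  have he : 0 < 2 * (p - (1 - σ * (m - 1) / 2)) := by linarith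
  set α := (σ + 2) / (2 * (p - (1 - σ * (m - 1) / 2)))
  set β := (m - p) / (2 * (p - (1 - σ * (m - 1) / 2)))
  set γ := 1 / (m - 1)
  have hα : 0 < α := div_pos (by linarith) he
  have hβ : 0 < β := div_pos (by linarith) he
  have hγ0 : 0 < γ := one_div_pos.2 (by linarith)
  have hγ : γ * (m - 1) = 1 := one_div_mul_cancel (by linarith)
  have hαe : α * (2 * (p - (1 - σ * (m - 1) / 2))) = σ + 2 := div_mul_cancel₀ _ he.ne'
  have hβe : β * (2 * (p - (1 - σ * (m - 1) / 2))) = m - p := div_mul_cancel₀ _ he.ne'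
  have hαm : α * (m - 1) = 2 * β + 1 :=
    mul_right_cancel₀ he.ne' (by linear_combination (m - 1) * hαe - 2 * hβe)
  have hαp : α * (p - 1) + β * σ = 1 :=
    mul_right_cancel₀ he.ne' (by linear_combination (p - 1) * hαe + σ * hβe)
  have hlim := tendsto_sqrt_rpow_mul_rpow_atTop (b := m) (D := β * (m - 1))
    (K := (2 * β * γ / (α + 2 * N * β + 2 * β * γ)) ^ (γ * (p - 1))) (by linarith)
    (by nlinarith) (by positivity) (by linarith : 0 < (m - 1) * σ / 2 + (p - 1))
  obtain ⟨A₁, hA₁⟩ := eventually_atTop.1 (hlim.eventually_ge_atTop (α + 2 * N * β))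
  refine ⟨max 1 A₁, lt_max_of_lt_left one_pos, fun A hA T _ t _ htT x hx0 hxa => ?_⟩
  exact selfSimilarProfile_subsolution hm hp hσu.le hα hβ
    (one_pos.trans_le ((le_max_left _ _).trans hA)) hγ hαm hαp rfl
    (hA₁ A (le_of_max_le_right hA)) htT hx0 hxa

/-- Lemma 6.2: the explicit self-similar profile `S` is a classical subsolution of
`∂ₜ u = Δ uᵐ + |x|^σ u^p` on the open region where it is positive and `x ≠ 0`. -/
theorem self_similar_subsolution
    (N : ℕ) (hN : 1 ≤ N) (m p σ : ℝ) (hm : 1 < m) (hp : 1 < p)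
    (hσl : max (-2) (-(N : ℝ)) < σ) (hσu : σ < 0)
    (hpG : 1 - σ * (m - 1) / 2 < p) (hpm : p < m) :
    ∃ A₀ : ℝ, 0 < A₀ ∧
      ∀ A : ℝ, A₀ ≤ A → ∀ T : ℝ, 0 < T →
        let α := (σ + 2) / (2 * (p - (1 - σ * (m - 1) / 2)))
        let β := (m - p) / (2 * (p - (1 - σ * (m - 1) / 2)))
        let a := Real.sqrt (m * A ^ (m - 1) / (β * (m - 1)))
        let S : ℝ → EuclideanSpace ℝ (Fin N) → ℝ := fun t x =>
          (T - t) ^ (-α) * A * (max 0 (1 - ‖x‖ ^ 2 * (T - t) ^ (2 * β) / a ^ 2)) ^ (1 / (m - 1))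
        ∀ t : ℝ, 0 ≤ t → t < T →
          ∀ x : EuclideanSpace ℝ (Fin N), 0 < ‖x‖ → ‖x‖ < a * (T - t) ^ (-β) →
            DifferentiableAt ℝ (fun s => S s x) t ∧
            (∃ U ∈ nhds x, ContDiffOn ℝ 2 (fun y => S t y ^ m) U) ∧
            deriv (fun s => S s x) t - laplacian (fun y => S t y ^ m) x
                - ‖x‖ ^ σ * S t x ^ p ≤ 0 :=
  self_similar_subsolution_general N m p σ hm hp hσl hσu hpG hpm
end

section
/- Let N ≥ 1 be an integer, σ ∈ (−N, 0), p > 0, r ≥ 1, and let α, β ∈ (0,1) satisfy rσ + Nα > 0 and rσ + Nβ < 0. Then for every measurable function f : ℝᴺ → [0,∞), ∫_{ℝᴺ} (|x|^σ f(x)^p)^r dx ≤ (Nω_N)^α (α/(rσ+Nα))^α (∫_{ℝᴺ} f(x)^{pr/(1−α)} dx)^{1−α} + (Nω_N)^β (β/(−rσ−Nβ))^β (∫_{ℝᴺ} f(x)^{pr/(1−β)} dx)^{1−β}, where both sides take values in [0,∞]. -/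
/-! On the unit ball apply Hölder's inequality with exponents `1/α` and `1/(1-α)`, and on its
complement with `1/β` and `1/(1-β)`. What remains of the weight is `∫ ‖x‖ ^ (rσ/θ)` over the
piece (`θ = α` resp. `θ = β`); in polar coordinates this is `N ω_N ∫ ρ ^ (rσ/θ + N - 1) dρ`,
which is finite over `(0, 1)` because `rσ + Nα > 0` and over `(1, ∞)` because `rσ + Nβ < 0`. -/

open MeasureTheory Measure Set Metric

theorem ENNReal.ofReal_mul_rpow {a b θ : ℝ} (ha : 0 ≤ a) (hb : 0 ≤ b) (hθ : 0 ≤ θ) :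
    ENNReal.ofReal (a * b) ^ θ = ENNReal.ofReal (a ^ θ * b ^ θ) := by
  rw [ENNReal.ofReal_rpow_of_nonneg (mul_nonneg ha hb) hθ, Real.mul_rpow ha hb]

theorem lintegral_ofReal_mul_le_Lp_mul_Lq {X : Type*} [MeasurableSpace X] (μ : Measure X) {θ : ℝ}
    (hθ₀ : 0 < θ) (hθ₁ : θ < 1) {u v : X → ℝ} (hu : AEMeasurable u μ) (hv : AEMeasurable v μ)
    (hu₀ : ∀ x, 0 ≤ u x) (hv₀ : ∀ x, 0 ≤ v x) :
    ∫⁻ x, ENNReal.ofReal (u x * v x) ∂μ ≤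
      (∫⁻ x, ENNReal.ofReal (u x ^ θ⁻¹) ∂μ) ^ θ *
        (∫⁻ x, ENNReal.ofReal (v x ^ (1 - θ)⁻¹) ∂μ) ^ (1 - θ) := by
  have key := ENNReal.lintegral_mul_le_Lp_mul_Lq μ (Real.HolderConjugate.inv_one_sub_inv hθ₀ hθ₁)
    hu.ennreal_ofReal hv.ennreal_ofReal
  simp only [Pi.mul_apply, ← ENNReal.ofReal_mul (hu₀ _), one_div, inv_inv] at key
  simpa only [ENNReal.ofReal_rpow_of_nonneg (hu₀ _) (inv_pos.2 hθ₀).le,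
    ENNReal.ofReal_rpow_of_nonneg (hv₀ _) (inv_pos.2 (sub_pos.2 hθ₁)).le] using key

theorem setLIntegral_norm_rpow_mul_rpow_le {E : Type*} [NormedAddCommGroup E] [MeasurableSpace E]
    [OpensMeasurableSpace E] (μ : Measure E) (s : Set E) {θ τ q : ℝ} (hθ₀ : 0 < θ) (hθ₁ : θ < 1)
    {f : E → ℝ} (hf : AEMeasurable f μ) (hf₀ : ∀ x, 0 ≤ f x) :
    ∫⁻ x in s, ENNReal.ofReal (‖x‖ ^ τ * f x ^ q) ∂μ ≤
      (∫⁻ x in s, ENNReal.ofReal (‖x‖ ^ (τ / θ)) ∂μ) ^ θ *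
        (∫⁻ x, ENNReal.ofReal (f x ^ (q / (1 - θ))) ∂μ) ^ (1 - θ) := by
  refine (lintegral_ofReal_mul_le_Lp_mul_Lq _ hθ₀ hθ₁ (measurable_norm.pow_const τ).aemeasurable
    (hf.restrict.pow_const q) (fun x ↦ by positivity) (fun x ↦ Real.rpow_nonneg (hf₀ x) q)).trans ?_
  simp only [← Real.rpow_mul (norm_nonneg _), ← Real.rpow_mul (hf₀ _), ← div_eq_mul_inv]
  gcongr
  exact Measure.restrict_le_self

theorem lintegral_Ioo_zero_one_rpow {s : ℝ} (hs : -1 < s) :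
    ∫⁻ y in Ioo 0 1, ENNReal.ofReal (y ^ s) = ENNReal.ofReal (s + 1)⁻¹ := by
  have hint : IntegrableOn (fun y : ℝ ↦ y ^ s) (Ioo 0 1) :=
    (intervalIntegral.intervalIntegrable_rpow' hs).1.mono_set Ioo_subset_Ioc_self
  rw [← ofReal_integral_eq_lintegral_ofReal hint
    ((ae_restrict_mem measurableSet_Ioo).mono fun y hy ↦ Real.rpow_nonneg hy.1.le s),
    ← integral_Ioc_eq_integral_Ioo, ← intervalIntegral.integral_of_le zero_le_one,
    integral_rpow (Or.inl hs), Real.one_rpow, Real.zero_rpow (by linarith), sub_zero, one_div]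

theorem lintegral_Ioi_one_rpow {s : ℝ} (hs : s < -1) :
    ∫⁻ y in Ioi 1, ENNReal.ofReal (y ^ s) = ENNReal.ofReal (-(s + 1))⁻¹ := by
  rw [← ofReal_integral_eq_lintegral_ofReal (integrableOn_Ioi_rpow_of_lt hs one_pos)
    ((ae_restrict_mem measurableSet_Ioi).mono fun y hy ↦ Real.rpow_nonneg (one_pos.trans hy).le s),
    integral_Ioi_rpow_of_lt hs one_pos, Real.one_rpow, neg_div, one_div, inv_neg]

section Polar

variable {E : Type*} [NormedAddCommGroup E] [NormedSpace ℝ E] [MeasurableSpace E] [BorelSpace E]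
  [FiniteDimensional ℝ E] [Nontrivial E] (μ : Measure E) [μ.IsAddHaarMeasure]

local notation "dim" => Module.finrank ℝ

theorem lintegral_fun_norm_addHaar (G : ℝ → ENNReal) (hG : Measurable G) :
    ∫⁻ x, G ‖x‖ ∂μ = dim E * μ (ball 0 1) * ∫⁻ y in Ioi 0, ENNReal.ofReal (y ^ (dim E - 1)) * G y :=
  calc ∫⁻ x, G ‖x‖ ∂μ = ∫⁻ x : ({0}ᶜ : Set E), G ‖x.1‖ ∂μ.comap (↑) := by
        rw [lintegral_subtype_comap (measurableSet_singleton _).compl fun x ↦ G ‖x‖,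
          restrict_compl_singleton]
    _ = ∫⁻ x, G x.2 ∂μ.toSphere.prod (.volumeIoiPow (dim E - 1)) := by
        simpa using (μ.measurePreserving_homeomorphUnitSphereProd).lintegral_comp_emb
          (Homeomorph.measurableEmbedding _) (G ∘ Subtype.val ∘ Prod.snd)
    _ = μ.toSphere univ * ∫⁻ y : Ioi (0 : ℝ), G y ∂.volumeIoiPow (dim E - 1) := by
        rw [lintegral_prod _ (show Measurable fun x : sphere (0 : E) 1 × Ioi (0 : ℝ) ↦ G x.2 from
          hG.comp (measurable_subtype_coe.comp measurable_snd)).aemeasurable]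
        simp only [lintegral_const, mul_comm]
    _ = _ := by
        rw [toSphere_apply_univ, volumeIoiPow, lintegral_withDensity_eq_lintegral_mul _
          (measurable_subtype_coe.pow_const _).ennreal_ofReal
          (show Measurable fun y : Ioi (0 : ℝ) ↦ G y from hG.comp measurable_subtype_coe)]
        exact congrArg _ (lintegral_subtype_comap measurableSet_Ioi fun y ↦
          ENNReal.ofReal (y ^ (dim E - 1)) * G y)

theorem setLIntegral_norm_preimage_rpow (t : ℝ) {I : Set ℝ} (hI : MeasurableSet I) :
    ∫⁻ x in norm ⁻¹' I, ENNReal.ofReal (‖x‖ ^ t) ∂μ =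
      dim E * μ (ball 0 1) * ∫⁻ y in I ∩ Ioi 0, ENNReal.ofReal (y ^ (t + dim E - 1)) := by
  have hmeas : Measurable fun y : ℝ ↦ ENNReal.ofReal (y ^ t) :=
    (measurable_id.pow_const t).ennreal_ofReal
  rw [← lintegral_indicator (measurable_norm hI)]
  change ∫⁻ x, (norm ⁻¹' I).indicator ((fun y ↦ ENNReal.ofReal (y ^ t)) ∘ norm) x ∂μ = _
  simp only [indicator_comp_right]
  rw [lintegral_fun_norm_addHaar μ _ (hmeas.indicator hI)]
  simp only [← indicator_mul_right I fun y : ℝ ↦ ENNReal.ofReal (y ^ (dim E - 1))]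
  rw [lintegral_indicator hI, restrict_restrict hI]
  congr 1
  refine setLIntegral_congr_fun (hI.inter measurableSet_Ioi) fun y ⟨_, hy⟩ ↦ ?_
  have hdim : ((dim E - 1 : ℕ) : ℝ) = dim E - 1 := by
    rw [Nat.cast_sub Module.finrank_pos, Nat.cast_one]
  rw [← ENNReal.ofReal_mul (pow_nonneg hy.le _), ← Real.rpow_natCast, ← Real.rpow_add hy, hdim]
  ring_nf

theorem lintegral_ball_norm_rpow {t : ℝ} (ht : 0 < t + dim E) :
    ∫⁻ x in ball 0 1, ENNReal.ofReal (‖x‖ ^ t) ∂μ =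
      ENNReal.ofReal (dim E * μ.real (ball 0 1) * (t + dim E)⁻¹) := by
  have hball : ball (0 : E) 1 = norm ⁻¹' Iio 1 := by ext; simp
  rw [hball, setLIntegral_norm_preimage_rpow μ t measurableSet_Iio, Iio_inter_Ioi,
    lintegral_Ioo_zero_one_rpow (by linarith), sub_add_cancel, ← hball,
    ENNReal.ofReal_mul (by positivity), ENNReal.ofReal_mul (by positivity),
    ENNReal.ofReal_natCast, ofReal_measureReal]

theorem lintegral_compl_ball_norm_rpow {t : ℝ} (ht : t + dim E < 0) :
    ∫⁻ x in (ball 0 1)ᶜ, ENNReal.ofReal (‖x‖ ^ t) ∂μ =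
      ENNReal.ofReal (dim E * μ.real (ball 0 1) * (-(t + dim E))⁻¹) := by
  have hcompl : (ball (0 : E) 1)ᶜ = norm ⁻¹' Ici 1 := by ext; simp
  rw [hcompl, setLIntegral_norm_preimage_rpow μ t measurableSet_Ici,
    inter_eq_left.2 (Ici_subset_Ioi.2 one_pos), setLIntegral_congr Ioi_ae_eq_Ici.symm,
    lintegral_Ioi_one_rpow (by linarith), sub_add_cancel,
    ENNReal.ofReal_mul (by positivity), ENNReal.ofReal_mul (by positivity),
    ENNReal.ofReal_natCast, ofReal_measureReal]

end Polar

theorem weighted_holder_estimate_general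
    (N : ℕ) (σ p r α β : ℝ)
    (hα₀ : 0 < α) (hα₁ : α < 1) (hβ₀ : 0 < β) (hβ₁ : β < 1)
    (h₁ : 0 < r * σ + N * α) (h₂ : r * σ + N * β < 0)
    (f : EuclideanSpace ℝ (Fin N) → ℝ) (hf : Measurable f) (hf₀ : ∀ x, 0 ≤ f x) :
    (∫⁻ x, ENNReal.ofReal ((‖x‖ ^ σ * f x ^ p) ^ r)) ≤
      ENNReal.ofReal
          (((N : ℝ) * (volume (Metric.ball (0 : EuclideanSpace ℝ (Fin N)) 1)).toReal) ^ α *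
            (α / (r * σ + N * α)) ^ α)
        * (∫⁻ x, ENNReal.ofReal (f x ^ (p * r / (1 - α)))) ^ (1 - α)
      + ENNReal.ofReal
          (((N : ℝ) * (volume (Metric.ball (0 : EuclideanSpace ℝ (Fin N)) 1)).toReal) ^ β *
            (β / (-(r * σ) - N * β)) ^ β)
        * (∫⁻ x, ENNReal.ofReal (f x ^ (p * r / (1 - β)))) ^ (1 - β) := by
  have : NeZero N := ⟨by rintro rfl; simp at h₁ h₂; linarith⟩
  have hdim : Module.finrank ℝ (EuclideanSpace ℝ (Fin N)) = N := finrank_euclideanSpace_fin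
  have hball := lintegral_ball_norm_rpow volume (t := σ * r / α) (by
    rw [hdim, div_add' _ _ _ hα₀.ne']; exact div_pos (by linarith) hα₀)
  have hcompl := lintegral_compl_ball_norm_rpow volume (t := σ * r / β) (by
    rw [hdim, div_add' _ _ _ hβ₀.ne']; exact div_neg_of_neg_of_pos (by linarith) hβ₀)
  rw [hdim, measureReal_def] at hball hcompl
  have hαw : (σ * r / α + N)⁻¹ = α / (r * σ + N * α) := by field_simp
  have hβw : (-(σ * r / β + N))⁻¹ = β / (-(r * σ) - N * β) := by
    rw [show -(σ * r / β + N) = (-(r * σ) - N * β) / β by field_simp; ring, inv_div]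
  have hω : 0 ≤ (N : ℝ) * (volume (ball (0 : EuclideanSpace ℝ (Fin N)) 1)).toReal := by positivity
  calc ∫⁻ x, ENNReal.ofReal ((‖x‖ ^ σ * f x ^ p) ^ r)
      = ∫⁻ x, ENNReal.ofReal (‖x‖ ^ (σ * r) * f x ^ (p * r)) := lintegral_congr fun x ↦ by
        rw [Real.mul_rpow (by positivity) (Real.rpow_nonneg (hf₀ x) p),
          ← Real.rpow_mul (norm_nonneg x), ← Real.rpow_mul (hf₀ x)]
    _ = (∫⁻ x in ball 0 1, ENNReal.ofReal (‖x‖ ^ (σ * r) * f x ^ (p * r))) +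
          ∫⁻ x in (ball 0 1)ᶜ, ENNReal.ofReal (‖x‖ ^ (σ * r) * f x ^ (p * r)) :=
        (lintegral_add_compl _ measurableSet_ball).symm
    _ ≤ _ := by
      gcongr ?_ + ?_
      · refine (setLIntegral_norm_rpow_mul_rpow_le _ _ hα₀ hα₁ hf.aemeasurable hf₀).trans_eq ?_
        rw [hball, hαw, ENNReal.ofReal_mul_rpow hω (div_pos hα₀ h₁).le hα₀.le]
      · refine (setLIntegral_norm_rpow_mul_rpow_le _ _ hβ₀ hβ₁ hf.aemeasurable hf₀).trans_eq ?_
        rw [hcompl, hβw, ENNReal.ofReal_mul_rpow hω (div_nonneg hβ₀.le (by linarith)) hβ₀.le]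

/-- A Hölder-type estimate for the singularly weighted source term (core of
Proposition 3.3). -/
theorem weighted_holder_estimate
    (N : ℕ) (hN : 1 ≤ N) (σ p r α β : ℝ)
    (hσl : -(N : ℝ) < σ) (hσu : σ < 0) (hp : 0 < p) (hr : 1 ≤ r)
    (hα₀ : 0 < α) (hα₁ : α < 1) (hβ₀ : 0 < β) (hβ₁ : β < 1)
    (h₁ : 0 < r * σ + N * α) (h₂ : r * σ + N * β < 0)
    (f : EuclideanSpace ℝ (Fin N) → ℝ) (hf : Measurable f) (hf₀ : ∀ x, 0 ≤ f x) :
    (∫⁻ x, ENNReal.ofReal ((‖x‖ ^ σ * f x ^ p) ^ r)) ≤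
      ENNReal.ofReal
          (((N : ℝ) * (volume (Metric.ball (0 : EuclideanSpace ℝ (Fin N)) 1)).toReal) ^ α *
            (α / (r * σ + N * α)) ^ α)
        * (∫⁻ x, ENNReal.ofReal (f x ^ (p * r / (1 - α)))) ^ (1 - α)
      + ENNReal.ofReal
          (((N : ℝ) * (volume (Metric.ball (0 : EuclideanSpace ℝ (Fin N)) 1)).toReal) ^ β *
            (β / (-(r * σ) - N * β)) ^ β)
        * (∫⁻ x, ENNReal.ofReal (f x ^ (p * r / (1 - β)))) ^ (1 - β) :=
  weighted_holder_estimate_general N σ p r α β hα₀ hα₁ hβ₀ hβ₁ h₁ h₂ f hf hf₀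
end

section
/- Let a ∈ (0,1) and define b₀ := (ln 2)^{a−2} (a² − (1+3 ln 2) a + 2(ln 2)²)/2, b₁ := (a/2)(ln 2)^{a−2}(1 − a + 2 ln 2), b₂ := (a/8)(ln 2)^{a−2}(1 − a + ln 2), and w : ℝ²∖{0} → ℝ by w(x) = (−ln |x|)^a for 0 < |x| ≤ 1/2 and w(x) = b₀ + b₁/|x| − b₂/|x|² for |x| ≥ 1/2. Then w is twice continuously differentiable on ℝ²∖{0}. Moreover, if additionally a² − (1+3 ln 2) a + 2(ln 2)² > 0, then w(x) > 0 for every x ∈ ℝ²∖{0}. -/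
/-!
Writing `w x = φ ‖x‖`, it suffices that the radial profile `φ` is `C²` on `(0, ∞)`, since the
norm is smooth away from `0`. Both pieces of `φ` are smooth near their own side of `1/2`, and
`b₀, b₁, b₂` are exactly the coefficients for which the values and the first two derivatives of
the pieces agree at `1/2`; so gluing the derivatives of the pieces gives the derivatives of `φ`.

For positivity, `(-log r) ^ a > 0` on `(0, 1/2]`. For `r ≥ 1/2` the outer piece is a quadratic in
`u = 1/r ∈ (0, 2]` which is concave (`b₂ ≥ 0`), positive at `u = 0` (`b₀ > 0`) and positive at
`u = 2` (where it equals `(log 2) ^ a`), hence positive in between.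
-/

open Real Set

theorem hasDerivAt_ite_le {f₁ f₂ f₁' f₂' : ℝ → ℝ} {c x : ℝ}
    (h₁ : x ≤ c → HasDerivAt f₁ (f₁' x) x)
    (h₂ : c ≤ x → HasDerivAt f₂ (f₂' x) x) (hc : f₁ c = f₂ c) (hc' : f₁' c = f₂' c) :
    HasDerivAt (fun t => if t ≤ c then f₁ t else f₂ t) (if x ≤ c then f₁' x else f₂' x) x := by
  rcases lt_trichotomy x c with hxc | rfl | hcx
  · rw [if_pos hxc.le]
    refine (h₁ hxc.le).congr_of_eventuallyEq ?_
    filter_upwards [eventually_lt_nhds hxc] with t ht using if_pos ht.le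
  · rw [if_pos le_rfl]
    have hleft : HasDerivWithinAt (fun t => if t ≤ x then f₁ t else f₂ t) (f₁' x) (Iic x) x :=
      (h₁ le_rfl).hasDerivWithinAt.congr (fun t ht => if_pos ht) (if_pos le_rfl)
    have hright : HasDerivWithinAt (fun t => if t ≤ x then f₁ t else f₂ t) (f₁' x) (Ici x) x := by
      refine hc' ▸ (h₂ le_rfl).hasDerivWithinAt.congr (fun t ht => ?_) (by simp [hc])
      rcases (mem_Ici.mp ht).eq_or_lt with rfl | hlt
      · simp [hc]
      · exact if_neg hlt.not_ge
    simpa using (hleft.union hright)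
  · rw [if_neg hcx.not_ge]
    refine (h₂ hcx.le).congr_of_eventuallyEq ?_
    filter_upwards [eventually_gt_nhds hcx] with t ht using if_neg ht.not_ge

theorem contDiffOn_succ_of_hasDerivAt {f f' : ℝ → ℝ} {s : Set ℝ} {n : ℕ} (hs : IsOpen s)
    (hf : ∀ x ∈ s, HasDerivAt f (f' x) x) (hf' : ContDiffOn ℝ n f' s) :
    ContDiffOn ℝ (n + 1) f s := by
  rw [contDiffOn_succ_iff_deriv_of_isOpen hs]
  refine ⟨fun x hx => (hf x hx).differentiableAt.differentiableWithinAt, by simp, ?_⟩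
  exact hf'.congr fun x hx => (hf x hx).deriv

theorem ContDiffOn.comp_norm {E : Type*} [NormedAddCommGroup E] [InnerProductSpace ℝ E]
    {φ : ℝ → ℝ} {n : WithTop ℕ∞} (hφ : ContDiffOn ℝ n φ (Ioi 0)) :
    ContDiffOn ℝ n (fun x : E => φ ‖x‖) {x | x ≠ 0} :=
  hφ.comp (fun _ hx => (contDiffAt_norm ℝ hx).contDiffWithinAt)
    fun _ hx => norm_pos_iff.mpr hx

theorem hasDerivAt_neg_log_rpow (a : ℝ) {r : ℝ} (hr₀ : 0 < r) (hr₁ : r < 1) :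
    HasDerivAt (fun t => (-log t) ^ a) (-a * (-log r) ^ (a - 1) / r) r := by
  have hlog : -log r ≠ 0 := by linarith [log_neg hr₀ hr₁]
  refine (((hasDerivAt_log hr₀.ne').neg).rpow_const (p := a) (Or.inl hlog)).congr_deriv ?_
  simp only [Pi.neg_apply]
  field_simp

theorem hasDerivAt_neg_log_rpow_deriv (a : ℝ) {r : ℝ} (hr₀ : 0 < r) (hr₁ : r < 1) :
    HasDerivAt (fun t => -a * (-log t) ^ (a - 1) / t)
      (a * (a - 1) * (-log r) ^ (a - 2) / r ^ 2 + a * (-log r) ^ (a - 1) / r ^ 2) r := by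
  refine (((hasDerivAt_neg_log_rpow (a - 1) hr₀ hr₁).const_mul (-a)).div (hasDerivAt_id r)
    hr₀.ne').congr_deriv ?_
  rw [show a - 1 - 1 = a - 2 by ring, id]
  field_simp
  ring

theorem hasDerivAt_const_div_pow (b : ℝ) (n : ℕ) {r : ℝ} (hr : r ≠ 0) :
    HasDerivAt (fun t => b / t ^ n) (-(n * b) / r ^ (n + 1)) r := by
  refine ((hasDerivAt_const r b).div (hasDerivAt_pow n r) (pow_ne_zero n hr)).congr_deriv ?_
  rcases n with _ | n
  · simp
  · rw [Nat.add_sub_cancel]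
    field_simp
    ring

theorem hasDerivAt_inv_quadratic (b₀ b₁ b₂ : ℝ) {r : ℝ} (hr : r ≠ 0) :
    HasDerivAt (fun t => b₀ + b₁ / t - b₂ / t ^ 2) (-b₁ / r ^ 2 + 2 * b₂ / r ^ 3) r := by
  have h₁ := hasDerivAt_const_div_pow b₁ 1 hr
  simp only [pow_one] at h₁
  refine (((hasDerivAt_const r b₀).add h₁).sub (hasDerivAt_const_div_pow b₂ 2 hr)).congr_deriv ?_
  push_cast
  ring

theorem hasDerivAt_inv_quadratic_deriv (b₁ b₂ : ℝ) {r : ℝ} (hr : r ≠ 0) :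
    HasDerivAt (fun t => -b₁ / t ^ 2 + 2 * b₂ / t ^ 3) (2 * b₁ / r ^ 3 - 6 * b₂ / r ^ 4) r := by
  refine ((hasDerivAt_const_div_pow (-b₁) 2 hr).add
    (hasDerivAt_const_div_pow (2 * b₂) 3 hr)).congr_deriv ?_
  push_cast
  ring

noncomputable def radialWeight (a b₀ b₁ b₂ c r : ℝ) : ℝ :=
  if r ≤ c then (-log r) ^ a else b₀ + b₁ / r - b₂ / r ^ 2

section RadialWeight

variable {a b₀ b₁ b₂ c : ℝ}

theorem contDiffOn_radialWeight (hc₁ : c < 1)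
    (h₀ : (-log c) ^ a = b₀ + b₁ / c - b₂ / c ^ 2)
    (h₁ : -a * (-log c) ^ (a - 1) / c = -b₁ / c ^ 2 + 2 * b₂ / c ^ 3)
    (h₂ : a * (a - 1) * (-log c) ^ (a - 2) / c ^ 2 + a * (-log c) ^ (a - 1) / c ^ 2 =
      2 * b₁ / c ^ 3 - 6 * b₂ / c ^ 4) :
    ContDiffOn ℝ 2 (radialWeight a b₀ b₁ b₂ c) (Ioi 0) := by
  set d₁ : ℝ → ℝ := fun r => if r ≤ c then -a * (-log r) ^ (a - 1) / r
    else -b₁ / r ^ 2 + 2 * b₂ / r ^ 3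
  set d₂ : ℝ → ℝ := fun r => if r ≤ c then
      a * (a - 1) * (-log r) ^ (a - 2) / r ^ 2 + a * (-log r) ^ (a - 1) / r ^ 2
    else 2 * b₁ / r ^ 3 - 6 * b₂ / r ^ 4
  have hd₂ : ContinuousOn d₂ (Ioi 0) := by
    refine ContinuousOn.if ?_ ?_ ?_
    · rintro r ⟨-, hr⟩
      rwa [(frontier_Iic : frontier (Iic c) = _).subset hr]
    · rintro r ⟨hr₀, hrc⟩
      have hr : r ≠ 0 := (mem_Ioi.mp hr₀).ne'
      have hlog : -log r ≠ 0 := by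
        linarith [log_neg hr₀ (((closure_Iic c).subset hrc).trans_lt hc₁)]
      exact ContinuousAt.continuousWithinAt
        (by fun_prop (disch := first | assumption | exact Or.inl hlog | positivity))
    · rintro r ⟨hr₀, -⟩
      have hr : r ≠ 0 := (mem_Ioi.mp hr₀).ne'
      exact ContinuousAt.continuousWithinAt (by fun_prop (disch := positivity))
  refine contDiffOn_succ_of_hasDerivAt (n := 1) (f' := d₁) isOpen_Ioi (fun r hr => ?_)
    (contDiffOn_succ_of_hasDerivAt (n := 0) (f' := d₂) isOpen_Ioi (fun r hr => ?_)
      (contDiffOn_zero.mpr hd₂))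
  · apply hasDerivAt_ite_le _ _ h₀ h₁
    · exact fun h => hasDerivAt_neg_log_rpow a hr (h.trans_lt hc₁)
    · exact fun _ => hasDerivAt_inv_quadratic b₀ b₁ b₂ hr.ne'
  · apply hasDerivAt_ite_le _ _ h₁ h₂
    · exact fun h => hasDerivAt_neg_log_rpow_deriv a hr (h.trans_lt hc₁)
    · exact fun _ => hasDerivAt_inv_quadratic_deriv b₁ b₂ hr.ne'

theorem inv_quadratic_pos {r : ℝ} (hc : 0 < c) (hcr : c ≤ r) (hb₀ : 0 < b₀) (hb₂ : 0 ≤ b₂)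
    (hbc : 0 < b₀ + b₁ / c - b₂ / c ^ 2) : 0 < b₀ + b₁ / r - b₂ / r ^ 2 := by
  have hr : 0 < r := hc.trans_le hcr
  have hchord : b₀ + b₁ / r - b₂ / r ^ 2 =
      (1 - c / r) * b₀ + c / r * (b₀ + b₁ / c - b₂ / c ^ 2) + b₂ / r * (1 / c - 1 / r) := by
    field_simp
    ring
  have hcr' : 0 ≤ 1 - c / r := sub_nonneg.mpr ((div_le_one hr).mpr hcr)
  have hcr'' : 0 ≤ 1 / c - 1 / r := sub_nonneg.mpr (one_div_le_one_div_of_le hc hcr)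
  rw [hchord]
  exact add_pos_of_pos_of_nonneg (add_pos_of_nonneg_of_pos (mul_nonneg hcr' hb₀.le)
    (mul_pos (div_pos hc hr) hbc)) (mul_nonneg (div_nonneg hb₂ hr.le) hcr'')

theorem radialWeight_pos {r : ℝ} (hc₀ : 0 < c) (hc₁ : c < 1)
    (h₀ : (-log c) ^ a = b₀ + b₁ / c - b₂ / c ^ 2) (hb₀ : 0 < b₀) (hb₂ : 0 ≤ b₂) (hr : 0 < r) :
    0 < radialWeight a b₀ b₁ b₂ c r := by
  unfold radialWeight
  split_ifs with hrc
  · exact rpow_pos_of_pos (neg_pos.mpr (log_neg hr (hrc.trans_lt hc₁))) a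
  · exact inv_quadratic_pos hc₀ (le_of_not_ge hrc) hb₀ hb₂
      (h₀ ▸ rpow_pos_of_pos (neg_pos.mpr (log_neg hc₀ hc₁)) a)

end RadialWeight

theorem weight_coeffs_match_at_half {a b₀ b₁ b₂ : ℝ}
    (hb₀ : b₀ = log 2 ^ (a - 2) * (a ^ 2 - (1 + 3 * log 2) * a + 2 * log 2 ^ 2) / 2)
    (hb₁ : b₁ = a / 2 * log 2 ^ (a - 2) * (1 - a + 2 * log 2))
    (hb₂ : b₂ = a / 8 * log 2 ^ (a - 2) * (1 - a + log 2)) :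
    (-log (1 / 2)) ^ a = b₀ + b₁ / (1 / 2) - b₂ / (1 / 2) ^ 2 ∧
    -a * (-log (1 / 2)) ^ (a - 1) / (1 / 2) = -b₁ / (1 / 2) ^ 2 + 2 * b₂ / (1 / 2) ^ 3 ∧
    a * (a - 1) * (-log (1 / 2)) ^ (a - 2) / (1 / 2) ^ 2 +
        a * (-log (1 / 2)) ^ (a - 1) / (1 / 2) ^ 2 =
      2 * b₁ / (1 / 2) ^ 3 - 6 * b₂ / (1 / 2) ^ 4 := by
  have hL : 0 < log 2 := log_pos one_lt_two
  have hlog : -log (1 / 2 : ℝ) = log 2 := by simp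
  have hpow₀ : log 2 ^ a = log 2 ^ (a - 2) * log 2 ^ 2 := by
    rw [← rpow_natCast, ← rpow_add hL]
    norm_num
  have hpow₁ : log 2 ^ (a - 1) = log 2 ^ (a - 2) * log 2 := by
    rw [← rpow_add_one hL.ne']
    ring_nf
  rw [hlog, hpow₀, hpow₁, hb₀, hb₁, hb₂]
  exact ⟨by ring, by ring, by ring⟩

/-- The singular weight used in the uniqueness proof in dimension `N = 2`:
regularity and positivity. -/
theorem weight_dim_two
    (a b₀ b₁ b₂ : ℝ) (ha₀ : 0 < a) (ha₁ : a < 1)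
    (hb₀ : b₀ = Real.log 2 ^ (a - 2) *
      (a ^ 2 - (1 + 3 * Real.log 2) * a + 2 * Real.log 2 ^ 2) / 2)
    (hb₁ : b₁ = a / 2 * Real.log 2 ^ (a - 2) * (1 - a + 2 * Real.log 2))
    (hb₂ : b₂ = a / 8 * Real.log 2 ^ (a - 2) * (1 - a + Real.log 2))
    (w : EuclideanSpace ℝ (Fin 2) → ℝ)
    (hw₁ : ∀ x : EuclideanSpace ℝ (Fin 2), 0 < ‖x‖ → ‖x‖ ≤ 1 / 2 →
      w x = (-Real.log ‖x‖) ^ a)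
    (hw₂ : ∀ x : EuclideanSpace ℝ (Fin 2), 1 / 2 ≤ ‖x‖ →
      w x = b₀ + b₁ / ‖x‖ - b₂ / ‖x‖ ^ 2) :
    ContDiffOn ℝ 2 w {x : EuclideanSpace ℝ (Fin 2) | x ≠ 0} ∧
    (0 < a ^ 2 - (1 + 3 * Real.log 2) * a + 2 * Real.log 2 ^ 2 →
      ∀ x : EuclideanSpace ℝ (Fin 2), x ≠ 0 → 0 < w x) := by
  have hw : EqOn w (fun x => radialWeight a b₀ b₁ b₂ (1 / 2) ‖x‖) {x | x ≠ 0} := by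
    intro x hx
    simp only [radialWeight]
    split_ifs with hx₂
    · exact hw₁ x (norm_pos_iff.mpr hx) hx₂
    · exact hw₂ x (le_of_not_ge hx₂)
  obtain ⟨h₀, h₁, h₂⟩ := weight_coeffs_match_at_half hb₀ hb₁ hb₂
  refine ⟨(contDiffOn_radialWeight (by norm_num) h₀ h₁ h₂).comp_norm.congr hw,
    fun hpos x hx => ?_⟩
  have hL : 0 < log 2 := log_pos one_lt_two
  have hM : 0 < log 2 ^ (a - 2) := rpow_pos_of_pos hL _
  rw [hw hx]
  refine radialWeight_pos (by norm_num) (by norm_num) h₀ ?_ ?_ (norm_pos_iff.mpr hx)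
  · rw [hb₀]
    exact div_pos (mul_pos hM hpos) two_pos
  · rw [hb₂]
    exact mul_nonneg (mul_nonneg (by linarith) hM.le) (by linarith)
end

section
/- Let m > 1 and p ≥ m, set a := (m+p)/(m+1) > 1, and let T ∈ (0,∞]. Let I : [0,T) → (0,∞) and E : [0,T) → ℝ be differentiable functions and D : [0,T) → [0,∞) a function such that for all t ∈ [0,T): E′(t) ≤ −D(t), I′(t) ≤ (m+1)·√(I(t)D(t)/m), and I′(t) ≥ −((m+1)(m+p)/m)·E(t). If E(0) < 0, then: (i) E(t)·I(t)^{−a} ≤ E(0)·I(0)^{−a} for all t ∈ [0,T); (ii) I′(t) ≥ κ·I(t)^a for all t ∈ [0,T), where κ := (m+1)(m+p)(−E(0))/(m·I(0)^a); and consequently (iii) T ≤ m·I(0)/((p−1)(m+p)(−E(0))) < ∞. -/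
open scoped ENNReal

/-- Monotonicity helper: if `f` has nonpositive derivative on `[0, T)`, then `f t ≤ f 0` there. -/
lemma energy_blowup_antitoneAux (T : ℝ≥0∞) (hT : 0 < T) (f f' : ℝ → ℝ)
    (hf : ∀ t : ℝ, 0 ≤ t → ENNReal.ofReal t < T →
      HasDerivWithinAt f (f' t) (Set.Ici (0 : ℝ)) t)
    (hf' : ∀ t : ℝ, 0 < t → ENNReal.ofReal t < T → f' t ≤ 0) :
    ∀ t : ℝ, 0 ≤ t → ENNReal.ofReal t < T → f t ≤ f 0 := by
  intro t ht0 htT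
  set S : Set ℝ := {x : ℝ | 0 ≤ x ∧ ENNReal.ofReal x < T} with hSdef
  have hsub : S ⊆ Set.Ici (0 : ℝ) := fun x hx => hx.1
  have hconv : Convex ℝ S := by
    rw [convex_iff_ordConnected]
    constructor
    intro x hx y hy z hz
    exact ⟨le_trans hx.1 hz.1, lt_of_le_of_lt (ENNReal.ofReal_le_ofReal hz.2) hy.2⟩
  have hcont : ContinuousOn f S := fun x hx =>
    ((hf x hx.1 hx.2).continuousWithinAt).mono hsub
  have hd : ∀ x ∈ interior S, HasDerivAt f (f' x) x := by
    intro x hx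
    have hxS : x ∈ S := interior_subset hx
    have hx0 : 0 < x := by
      have : x ∈ interior (Set.Ici (0 : ℝ)) := interior_mono hsub hx
      simpa using this
    exact (hf x hxS.1 hxS.2).hasDerivAt (Ici_mem_nhds hx0)
  have hmono : AntitoneOn f S := by
    apply antitoneOn_of_deriv_nonpos hconv hcont
    · intro x hx
      exact ((hd x hx).differentiableAt).differentiableWithinAt
    · intro x hx
      have hxS : x ∈ S := interior_subset hx
      have hx0 : 0 < x := by
        have : x ∈ interior (Set.Ici (0 : ℝ)) := interior_mono hsub hx
        simpa using this
      rw [(hd x hx).deriv]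
      exact hf' x hx0 hxS.2
  have h0S : (0 : ℝ) ∈ S := ⟨le_refl 0, by simpa using hT⟩
  exact hmono h0S ⟨ht0, htT⟩ ht0

/-- Pointwise algebraic core of the blow-up lemma. -/
lemma energy_blowup_core (m p It Dt Et E't I't : ℝ) (hm : 1 < m) (hpm : m ≤ p)
    (hIt : 0 < It) (hDt : 0 ≤ Dt) (hEt : Et < 0)
    (hE't : E't ≤ -Dt)
    (hle : I't ≤ (m + 1) * Real.sqrt (It * Dt / m))
    (hge : -((m + 1) * (m + p) / m) * Et ≤ I't) :
    E't * It - ((m + p) / (m + 1)) * Et * I't ≤ 0 := by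
  set s := Real.sqrt (It * Dt / m) with hsdef
  have hm0 : (0:ℝ) < m := by linarith
  have h1 : (0:ℝ) < m + 1 := by linarith
  have hmp : (0:ℝ) < m + p := by linarith
  have hs0 : 0 ≤ s := Real.sqrt_nonneg _
  have hss : s * s = It * Dt / m := Real.mul_self_sqrt (by positivity)
  have key : (m + 1) * (m + p) * (-Et) ≤ I't * m := by
    have h := hge
    rw [show -((m + 1) * (m + p) / m) * Et = (m + 1) * (m + p) * (-Et) / m by ring] at h
    exact (div_le_iff₀ hm0).mp h
  have hA : (m + p) * (-Et) ≤ m * s := by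
    have h2 : I't * m ≤ (m + 1) * s * m := mul_le_mul_of_nonneg_right hle hm0.le
    have h3 : (m + 1) * ((m + p) * (-Et)) ≤ (m + 1) * (m * s) := by nlinarith [key]
    exact le_of_mul_le_mul_left h3 h1
  have hB : (m + p) * (-Et) * I't ≤ (m + 1) * (It * Dt) := by
    have b1 : (m + p) * (-Et) * I't ≤ (m + p) * (-Et) * ((m + 1) * s) :=
      mul_le_mul_of_nonneg_left hle (by nlinarith)
    have b2 : (m + p) * (-Et) * ((m + 1) * s) ≤ (m * s) * ((m + 1) * s) :=
      mul_le_mul_of_nonneg_right hA (by positivity)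
    have b3 : (m * s) * ((m + 1) * s) = (m + 1) * (It * Dt) := by
      have : (m * s) * ((m + 1) * s) = m * (m + 1) * (s * s) := by ring
      rw [this, hss]
      field_simp
    linarith
  have hfin : (m + 1) * (E't * It) - (m + p) * (Et * I't) ≤ 0 := by
    have hE'I : E't * It ≤ -Dt * It := mul_le_mul_of_nonneg_right hE't hIt.le
    nlinarith [hB, hE'I, h1]
  have heq : E't * It - ((m + p) / (m + 1)) * Et * I't
      = ((m + 1) * (E't * It) - (m + p) * (Et * I't)) / (m + 1) := by
    field_simp
  rw [heq]
  exact div_nonpos_of_nonpos_of_nonneg hfin h1.le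

/-- The abstract differential-inequality lemma behind the energy blow-up proof
(Theorem 2.7): `I(t) = ‖u(t)‖_{m+1}^{m+1}`, `E(t)` the energy and `D(t)` the dissipation. -/
theorem energy_blowup
    (m p : ℝ) (hm : 1 < m) (hpm : m ≤ p) (T : ℝ≥0∞) (hT : 0 < T)
    (I I' E E' D : ℝ → ℝ)
    (hIpos : ∀ t : ℝ, 0 ≤ t → ENNReal.ofReal t < T → 0 < I t)
    (hDpos : ∀ t : ℝ, 0 ≤ t → ENNReal.ofReal t < T → 0 ≤ D t)
    (hIderiv : ∀ t : ℝ, 0 ≤ t → ENNReal.ofReal t < T →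
      HasDerivWithinAt I (I' t) (Set.Ici (0 : ℝ)) t)
    (hEderiv : ∀ t : ℝ, 0 ≤ t → ENNReal.ofReal t < T →
      HasDerivWithinAt E (E' t) (Set.Ici (0 : ℝ)) t)
    (hE' : ∀ t : ℝ, 0 ≤ t → ENNReal.ofReal t < T → E' t ≤ -D t)
    (hI'le : ∀ t : ℝ, 0 ≤ t → ENNReal.ofReal t < T →
      I' t ≤ (m + 1) * Real.sqrt (I t * D t / m))
    (hI'ge : ∀ t : ℝ, 0 ≤ t → ENNReal.ofReal t < T →
      -((m + 1) * (m + p) / m) * E t ≤ I' t)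
    (hE0 : E 0 < 0) :
    (∀ t : ℝ, 0 ≤ t → ENNReal.ofReal t < T →
      E t * I t ^ (-((m + p) / (m + 1))) ≤ E 0 * I 0 ^ (-((m + p) / (m + 1)))) ∧
    (∀ t : ℝ, 0 ≤ t → ENNReal.ofReal t < T →
      ((m + 1) * (m + p) * (-E 0) / (m * I 0 ^ ((m + p) / (m + 1)))) *
          I t ^ ((m + p) / (m + 1)) ≤ I' t) ∧
    T ≤ ENNReal.ofReal (m * I 0 / ((p - 1) * (m + p) * (-E 0))) := by
  have h0T : ENNReal.ofReal 0 < T := by simpa using hT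
  set a : ℝ := (m + p) / (m + 1) with ha
  have hm0 : (0:ℝ) < m := by linarith
  have h1 : (0:ℝ) < m + 1 := by linarith
  have hmp : (0:ℝ) < m + p := by linarith
  have hp1 : (0:ℝ) < p - 1 := by linarith
  have hI0 : 0 < I 0 := hIpos 0 le_rfl h0T
  have hI0a : 0 < I 0 ^ a := Real.rpow_pos_of_pos hI0 a
  -- Step 1: E is nonincreasing, hence negative
  have hEmono : ∀ t : ℝ, 0 ≤ t → ENNReal.ofReal t < T → E t ≤ E 0 :=
    energy_blowup_antitoneAux T hT E E' hEderiv (fun t ht htT => by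
      have := hE' t ht.le htT
      have := hDpos t ht.le htT
      linarith)
  have hEneg : ∀ t : ℝ, 0 ≤ t → ENNReal.ofReal t < T → E t < 0 :=
    fun t ht htT => lt_of_le_of_lt (hEmono t ht htT) hE0
  -- Step 2: conclusion (i)
  have hGderiv : ∀ t : ℝ, 0 ≤ t → ENNReal.ofReal t < T →
      HasDerivWithinAt (fun x => E x * I x ^ (-a))
        (E' t * I t ^ (-a) + E t * (I' t * (-a) * I t ^ (-a - 1))) (Set.Ici (0:ℝ)) t :=
    fun t ht htT =>
      (hEderiv t ht htT).mul ((hIderiv t ht htT).rpow_const (Or.inl (hIpos t ht htT).ne'))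
  have hG : ∀ t : ℝ, 0 ≤ t → ENNReal.ofReal t < T →
      E t * I t ^ (-a) ≤ E 0 * I 0 ^ (-a) := by
    apply energy_blowup_antitoneAux T hT _ _ hGderiv
    intro t ht htT
    have hIt := hIpos t ht.le htT
    have hcore := energy_blowup_core m p (I t) (D t) (E t) (E' t) (I' t) hm hpm hIt
      (hDpos t ht.le htT) (hEneg t ht.le htT) (hE' t ht.le htT)
      (hI'le t ht.le htT) (hI'ge t ht.le htT)
    rw [← ha] at hcore
    have hpow : I t ^ (-a) = I t ^ (-a - 1) * I t := by
      have h := Real.rpow_add hIt (-a - 1) 1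
      rw [Real.rpow_one] at h
      rw [← h]
      congr 1
      ring
    have heq : E' t * I t ^ (-a) + E t * (I' t * (-a) * I t ^ (-a - 1))
        = I t ^ (-a - 1) * (E' t * I t - a * E t * I' t) := by
      rw [hpow]; ring
    rw [heq]
    have hpos : (0:ℝ) ≤ I t ^ (-a - 1) := (Real.rpow_pos_of_pos hIt _).le
    have hfin := mul_le_mul_of_nonneg_left hcore hpos
    simpa using hfin
  -- Step 3: conclusion (ii)
  have hK : ∀ t : ℝ, 0 ≤ t → ENNReal.ofReal t < T →
      ((m + 1) * (m + p) * (-E 0) / (m * I 0 ^ a)) * I t ^ a ≤ I' t := by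
    intro t ht htT
    have hIt := hIpos t ht htT
    have hi := hG t ht htT
    have hmul := mul_le_mul_of_nonneg_right hi (Real.rpow_pos_of_pos hIt a).le
    have hone : I t ^ (-a) * I t ^ a = 1 := by
      rw [← Real.rpow_add hIt]; simp
    have hEt' : E t ≤ E 0 * I 0 ^ (-a) * I t ^ a := by
      calc E t = E t * (I t ^ (-a) * I t ^ a) := by rw [hone]; ring
        _ = E t * I t ^ (-a) * I t ^ a := by ring
        _ ≤ E 0 * I 0 ^ (-a) * I t ^ a := hmul
    have hstep : (-E 0) * I 0 ^ (-a) * I t ^ a ≤ -E t := by linarith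
    have hrw : ((m + 1) * (m + p) * (-E 0) / (m * I 0 ^ a)) * I t ^ a
        = ((m + 1) * (m + p) / m) * ((-E 0) * I 0 ^ (-a) * I t ^ a) := by
      rw [Real.rpow_neg hI0.le]
      field_simp
    rw [hrw]
    calc ((m + 1) * (m + p) / m) * ((-E 0) * I 0 ^ (-a) * I t ^ a)
        ≤ ((m + 1) * (m + p) / m) * (-E t) :=
          mul_le_mul_of_nonneg_left hstep (div_pos (mul_pos h1 hmp) hm0).le
      _ = -((m + 1) * (m + p) / m) * E t := by ring
      _ ≤ I' t := hI'ge t ht htT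
  -- Step 4: conclusion (iii)
  set κ : ℝ := (m + 1) * (m + p) * (-E 0) / (m * I 0 ^ a) with hκ
  set c : ℝ := (a - 1) * κ with hc
  have hκpos : 0 < κ :=
    div_pos (mul_pos (mul_pos h1 hmp) (neg_pos.mpr hE0)) (mul_pos hm0 hI0a)
  have ha1 : 0 < a - 1 := by
    rw [ha, lt_sub_iff_add_lt, zero_add, lt_div_iff₀ h1]
    linarith
  have hcpos : 0 < c := mul_pos ha1 hκpos
  have hJderiv : ∀ t : ℝ, 0 ≤ t → ENNReal.ofReal t < T →
      HasDerivWithinAt (fun x => I x ^ (1 - a) + c * x)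
        (I' t * (1 - a) * I t ^ (1 - a - 1) + c) (Set.Ici (0:ℝ)) t := by
    intro t ht htT
    have hd1 := (hIderiv t ht htT).rpow_const (p := 1 - a) (Or.inl (hIpos t ht htT).ne')
    have hd2 : HasDerivWithinAt (fun x : ℝ => c * x) c (Set.Ici (0:ℝ)) t := by
      simpa using (hasDerivWithinAt_id t (Set.Ici (0:ℝ))).const_mul c
    exact hd1.add hd2
  have hJmono : ∀ t : ℝ, 0 ≤ t → ENNReal.ofReal t < T →
      I t ^ (1 - a) + c * t ≤ I 0 ^ (1 - a) + c * 0 := by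
    apply energy_blowup_antitoneAux T hT _ _ hJderiv
    intro t ht htT
    have hIt := hIpos t ht.le htT
    have hk := hK t ht.le htT
    have hone : I t ^ (-a) * I t ^ a = 1 := by
      rw [← Real.rpow_add hIt]; simp
    have h2 : κ ≤ I t ^ (-a) * I' t := by
      have hmul := mul_le_mul_of_nonneg_left hk (Real.rpow_pos_of_pos hIt (-a)).le
      calc κ = I t ^ (-a) * (κ * I t ^ a) := by
            rw [show I t ^ (-a) * (κ * I t ^ a) = κ * (I t ^ (-a) * I t ^ a) by ring, hone]
            ring
        _ ≤ I t ^ (-a) * I' t := hmul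
    have h3 : c ≤ (a - 1) * (I t ^ (-a) * I' t) := by
      rw [hc]
      exact mul_le_mul_of_nonneg_left h2 ha1.le
    rw [show (1:ℝ) - a - 1 = -a by ring]
    nlinarith [h3]
  refine ⟨hG, hK, ?_⟩
  have hden : (0:ℝ) < (p - 1) * (m + p) * (-E 0) :=
    mul_pos (mul_pos hp1 hmp) (neg_pos.mpr hE0)
  have hbound : ∀ t : ℝ, 0 ≤ t → ENNReal.ofReal t < T →
      t < m * I 0 / ((p - 1) * (m + p) * (-E 0)) := by
    intro t ht htT
    have hJ := hJmono t ht htT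
    have hItp : 0 < I t ^ (1 - a) := Real.rpow_pos_of_pos (hIpos t ht htT) _
    have h4 : c * t < I 0 ^ (1 - a) := by nlinarith [hJ, hItp]
    have h5 : I 0 ^ (1 - a) = I 0 / I 0 ^ a := by
      rw [show (1:ℝ) - a = 1 + (-a) by ring, Real.rpow_add hI0, Real.rpow_one,
        Real.rpow_neg hI0.le]
      ring
    have hceq : c * (m * I 0 ^ a) = (p - 1) * (m + p) * (-E 0) := by
      rw [hc, hκ, ha]
      field_simp
      ring
    rw [lt_div_iff₀ hden]
    have h6 : c * t * (m * I 0 ^ a) < (I 0 / I 0 ^ a) * (m * I 0 ^ a) := by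
      apply mul_lt_mul_of_pos_right _ (mul_pos hm0 hI0a)
      rw [← h5]; exact h4
    have h7 : (I 0 / I 0 ^ a) * (m * I 0 ^ a) = m * I 0 := by
      field_simp
    calc t * ((p - 1) * (m + p) * (-E 0)) = c * t * (m * I 0 ^ a) := by rw [← hceq]; ring
      _ < m * I 0 := by rw [← h7]; exact h6
  by_contra hcon
  push_neg at hcon
  have hTs0 : (0:ℝ) ≤ m * I 0 / ((p - 1) * (m + p) * (-E 0)) :=
    (div_pos (mul_pos hm0 hI0) hden).le
  exact absurd (hbound _ hTs0 hcon) (lt_irrefl _)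
end
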